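/- Consider the adversarial K-armed bandit with losses in [0,1] over T rounds. The expected regret of the EXP3 algorithm with learning rate η = √(log K / (T K)) is at most 2√(T K log K). -/

import Mathlib

/-- Softmax distribution (with rate `η`) of negated cumulative scores `B`. -/
noncomputable def softmaxNeg {K : ℕ} (η : ℝ) (B : Fin K → ℝ) (k : Fin K) : ℝ :=
  Real.exp (-η * B k) / ∑ j, Real.exp (-η * B j)

/-- Importance-weighted cumulative loss estimates of EXP3, as a function of the
history of played arms (most recent first): upon playing arm `a` at round
`h.length`, the loss estimate `ℓ_t(a) 1{a = k} / π_t[k]` is added to arm `k`'s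
cumulative estimate, where `π_t` is the softmax of the current estimates. -/
noncomputable def exp3Lhat {K : ℕ} (η : ℝ) (ℓ : ℕ → Fin K → ℝ) :
    List (Fin K) → Fin K → ℝ
  | [] => fun _ => 0
  | a :: h => fun k =>
      exp3Lhat η ℓ h k +
        if a = k then ℓ h.length k / softmaxNeg η (exp3Lhat η ℓ h) k else 0

/-- The history (most recent first) of the plays of `a` strictly before time `t`. -/
def exp3Hist {T K : ℕ} (a : Fin T → Fin K) (t : Fin T) : List (Fin K) :=
  (List.ofFn fun s : Fin t.1 => a ⟨s.1, s.2.trans t.2⟩).reverse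

/-- The probability that EXP3 plays the arm sequence `a` over the `T` rounds:
the product over rounds of the softmax sampling probability of the played arm. -/
noncomputable def exp3SeqProb {T K : ℕ} (η : ℝ) (ℓ : ℕ → Fin K → ℝ)
    (a : Fin T → Fin K) : ℝ :=
  ∏ t, softmaxNeg η (exp3Lhat η ℓ (exp3Hist a t)) (a t)

/-!
The log-partition function `Φ(h) = log ∑ⱼ exp (-η L̃_h j)` starts at `log K` and is at least
`-η L̃_h k` for every arm `k`. Since `exp (-x) ≤ 1 - x + x²/2` for `x ≥ 0` and `log y ≤ y - 1`,
playing arm `a` with loss `ℓ` lowers it by at least `η ℓ - (η²/2) ℓ² / π(a)`. This gives a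
pathwise bound, and taking expectations the estimates `L̃` are unbiased while each quadratic
term has conditional expectation `∑ⱼ ℓ_t(j)² ≤ K`. Hence
`η (E[loss] - L_k) ≤ log K + η² T K / 2`, and the choice of `η` balances the two terms.
-/

open Finset Real

lemma Real.exp_neg_le_one_sub_add_sq_div_two {x : ℝ} (hx : 0 ≤ x) :
    exp (-x) ≤ 1 - x + x ^ 2 / 2 := by
  -- `(1 + x + x²/2)(1 - x + x²/2) = 1 + x⁴/4 ≥ 1` and `1 + x + x²/2 ≤ exp x`
  have hq : 0 < 1 + x + x ^ 2 / 2 := by positivity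
  rw [exp_neg, inv_le_iff_one_le_mul₀ (exp_pos x)]
  nlinarith [quadratic_le_exp_of_nonneg hx, sq_nonneg (x - 1), pow_nonneg hx 4]

section Softmax

variable {K : ℕ} (η : ℝ)

lemma sum_exp_neg_mul_pos [NeZero K] (B : Fin K → ℝ) : 0 < ∑ j, exp (-η * B j) :=
  sum_pos (fun _ _ => exp_pos _) univ_nonempty

lemma softmaxNeg_pos [NeZero K] (B : Fin K → ℝ) (k : Fin K) : 0 < softmaxNeg η B k :=
  div_pos (exp_pos _) (sum_exp_neg_mul_pos η B)

lemma sum_softmaxNeg [NeZero K] (B : Fin K → ℝ) : ∑ k, softmaxNeg η B k = 1 := by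
  simp only [softmaxNeg]
  rw [← sum_div, div_self (sum_exp_neg_mul_pos η B).ne']

lemma neg_mul_le_log_sum_exp (B : Fin K → ℝ) (k : Fin K) :
    -η * B k ≤ log (∑ j, exp (-η * B j)) := by
  rw [← log_exp (-η * B k)]
  exact log_le_log (exp_pos _)
    (single_le_sum (f := fun j => exp (-η * B j)) (fun _ _ => (exp_pos _).le) (mem_univ k))

lemma sum_exp_neg_mul_add_single [NeZero K] (B : Fin K → ℝ) (a : Fin K) (x : ℝ) :
    ∑ j, exp (-η * (B + Pi.single a x : Fin K → ℝ) j)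
      = (∑ j, exp (-η * B j)) * (1 + softmaxNeg η B a * (exp (-η * x) - 1)) := by
  have hS := (sum_exp_neg_mul_pos η B).ne'
  have hsplit : ∀ j, exp (-η * (B + Pi.single a x : Fin K → ℝ) j)
      = exp (-η * B j) + if j = a then exp (-η * B a) * (exp (-η * x) - 1) else 0 := by
    intro j
    by_cases hj : j = a
    · subst hj; simp only [Pi.add_apply, Pi.single_eq_same, if_true, mul_add, exp_add]; ring
    · simp [hj]
  rw [Fintype.sum_congr _ _ hsplit, sum_add_distrib, sum_ite_eq' univ a, if_pos (mem_univ a),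
    softmaxNeg]
  field_simp

lemma log_sum_exp_neg_mul_add_single_le [NeZero K] (hη : 0 ≤ η) (B : Fin K → ℝ) (a : Fin K)
    {x : ℝ} (hx : 0 ≤ x) :
    log (∑ j, exp (-η * (B + Pi.single a x : Fin K → ℝ) j))
      ≤ log (∑ j, exp (-η * B j)) - η * (softmaxNeg η B a * x)
        + η ^ 2 / 2 * (softmaxNeg η B a * x ^ 2) := by
  set S := ∑ j, exp (-η * B j)
  set y := 1 + softmaxNeg η B a * (exp (-η * x) - 1)
  have hS := sum_exp_neg_mul_pos η B
  have hSy : S * y = ∑ j, exp (-η * (B + Pi.single a x : Fin K → ℝ) j) :=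
    (sum_exp_neg_mul_add_single η B a x).symm
  have hy : 0 < y := pos_of_mul_pos_right (hSy ▸ sum_exp_neg_mul_pos η _) hS.le
  have hexp : exp (-η * x) - 1 ≤ -(η * x) + (η * x) ^ 2 / 2 := by
    have := exp_neg_le_one_sub_add_sq_div_two (mul_nonneg hη hx)
    rw [neg_mul]; linarith
  calc log (∑ j, exp (-η * (B + Pi.single a x : Fin K → ℝ) j))
      = log S + log y := by rw [← hSy, log_mul hS.ne' hy.ne']
    _ ≤ log S + (y - 1) := by linarith [log_le_sub_one_of_pos hy]
    _ ≤ _ := by linarith [mul_le_mul_of_nonneg_left hexp (softmaxNeg_pos η B a).le]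

end Softmax

section HistoryPolicy

variable {α : Type*}

def fullHist {n : ℕ} (a : Fin n → α) : List α := (List.ofFn a).reverse

@[simp]
lemma fullHist_length {n : ℕ} (a : Fin n → α) : (fullHist a).length = n := by
  simp [fullHist]

lemma fullHist_snoc {n : ℕ} (a : Fin n → α) (b : α) :
    fullHist (Fin.snoc a b : Fin (n + 1) → α) = b :: fullHist a := by
  rw [fullHist, List.ofFn_succ']
  simp [fullHist]

def histLoss (ℓ : ℕ → α → ℝ) : List α → ℝ
  | [] => 0
  | a :: h => histLoss ℓ h + ℓ h.length a

lemma histLoss_fullHist (ℓ : ℕ → α → ℝ) {n : ℕ} (a : Fin n → α) :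
    histLoss ℓ (fullHist a) = ∑ t : Fin n, ℓ t (a t) := by
  induction n with
  | zero => simp [fullHist, histLoss]
  | succ n ih =>
    rw [← Fin.snoc_init_self a, fullHist_snoc, histLoss, fullHist_length, ih,
      Fin.sum_univ_castSucc]
    simp

lemma Fintype.sum_pi_fin_succ [Fintype α] {M : Type*} [AddCommMonoid M] {n : ℕ}
    (f : (Fin (n + 1) → α) → M) :
    ∑ a, f a = ∑ a : Fin n → α, ∑ b, f (Fin.snoc a b) := by
  rw [← (Fin.snocEquiv fun _ => α).sum_comp f, Fintype.sum_prod_type, sum_comm]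
  rfl

variable (p : List α → α → ℝ)

def histProb : List α → ℝ
  | [] => 1
  | a :: h => histProb h * p h a

lemma histProb_nonneg (hp : ∀ h b, 0 ≤ p h b) (h : List α) : 0 ≤ histProb p h := by
  induction h with
  | nil => exact zero_le_one
  | cons a h ih => exact mul_nonneg ih (hp h a)

lemma sum_histProb_mul_succ [Fintype α] {n : ℕ} (f : List α → ℝ) :
    ∑ a : Fin (n + 1) → α, histProb p (fullHist a) * f (fullHist a)
      = ∑ a : Fin n → α,
          histProb p (fullHist a) * ∑ b, p (fullHist a) b * f (b :: fullHist a) := by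
  simp only [Fintype.sum_pi_fin_succ, fullHist_snoc, histProb, mul_sum, mul_assoc]

lemma sum_histProb [Fintype α] (hp : ∀ h, ∑ b, p h b = 1) (n : ℕ) :
    ∑ a : Fin n → α, histProb p (fullHist a) = 1 := by
  induction n with
  | zero => simp [fullHist, histProb]
  | succ n ih => simpa [hp, ih] using sum_histProb_mul_succ p (n := n) fun _ => 1

/-- Expectation of a process whose conditional increments are deterministic. -/
lemma sum_histProb_mul_eq_of_step [Fintype α] (hp : ∀ h, ∑ b, p h b = 1) (f : List α → ℝ)
    (c : ℕ → ℝ) (hf : ∀ h, ∑ b, p h b * f (b :: h) = f h + c h.length) (n : ℕ) :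
    ∑ a : Fin n → α, histProb p (fullHist a) * f (fullHist a) = f [] + ∑ s ∈ range n, c s := by
  induction n with
  | zero => simp [fullHist, histProb]
  | succ n ih =>
    rw [sum_histProb_mul_succ, sum_range_succ, ← add_assoc, ← ih]
    simp only [hf, fullHist_length, mul_add, sum_add_distrib, ← sum_mul, sum_histProb p hp,
      one_mul]

end HistoryPolicy

noncomputable section Exp3

variable {K : ℕ} (η : ℝ) (ℓ : ℕ → Fin K → ℝ)

def exp3Policy (h : List (Fin K)) : Fin K → ℝ := softmaxNeg η (exp3Lhat η ℓ h)

def exp3SecondMoment : List (Fin K) → ℝ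
  | [] => 0
  | a :: h => exp3SecondMoment h + ℓ h.length a ^ 2 / exp3Policy η ℓ h a

lemma exp3Hist_snoc_castSucc {n : ℕ} (a : Fin n → Fin K) (b : Fin K) (t : Fin n) :
    exp3Hist (Fin.snoc a b : Fin (n + 1) → Fin K) t.castSucc = exp3Hist a t := by
  unfold exp3Hist
  congr 2
  exact funext fun s => Fin.snoc_castSucc (α := fun _ => Fin K) b a ⟨s, s.2.trans t.2⟩

lemma exp3Hist_snoc_last {n : ℕ} (a : Fin n → Fin K) (b : Fin K) :
    exp3Hist (Fin.snoc a b : Fin (n + 1) → Fin K) (Fin.last n) = fullHist a := by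
  unfold exp3Hist fullHist
  congr 2
  exact funext fun s => Fin.snoc_castSucc (α := fun _ => Fin K) b a s

lemma exp3SeqProb_eq_histProb {n : ℕ} (a : Fin n → Fin K) :
    exp3SeqProb η ℓ a = histProb (exp3Policy η ℓ) (fullHist a) := by
  induction n with
  | zero => simp [exp3SeqProb, fullHist, histProb]
  | succ n ih =>
    rw [← Fin.snoc_init_self a, exp3SeqProb, Fin.prod_univ_castSucc]
    simp only [exp3Hist_snoc_castSucc, exp3Hist_snoc_last, Fin.snoc_castSucc, Fin.snoc_last,
      fullHist_snoc, histProb, ← ih]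
    rfl

lemma exp3Lhat_cons (a : Fin K) (h : List (Fin K)) :
    exp3Lhat η ℓ (a :: h)
      = exp3Lhat η ℓ h + Pi.single a (ℓ h.length a / exp3Policy η ℓ h a) := by
  ext k
  by_cases hk : a = k
  · subst hk; simp [exp3Lhat, exp3Policy]
  · simp [exp3Lhat, hk, Ne.symm hk]

variable [NeZero K]

lemma exp3Policy_pos (h : List (Fin K)) (a : Fin K) : 0 < exp3Policy η ℓ h a :=
  softmaxNeg_pos η _ a

lemma sum_exp3Policy (h : List (Fin K)) : ∑ a, exp3Policy η ℓ h a = 1 :=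
  sum_softmaxNeg η _

lemma sum_exp3SeqProb (n : ℕ) : ∑ a : Fin n → Fin K, exp3SeqProb η ℓ a = 1 := by
  simpa only [exp3SeqProb_eq_histProb] using sum_histProb _ (sum_exp3Policy η ℓ) n

/-- The importance-weighted estimates are unbiased. -/
lemma sum_exp3Policy_mul_exp3Lhat_cons (h : List (Fin K)) (k : Fin K) :
    ∑ b, exp3Policy η ℓ h b * exp3Lhat η ℓ (b :: h) k = exp3Lhat η ℓ h k + ℓ h.length k := by
  simp only [exp3Lhat_cons, Pi.add_apply, mul_add, sum_add_distrib, ← sum_mul, sum_exp3Policy,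
    one_mul, Pi.single_apply, mul_ite, mul_zero, sum_ite_eq, mem_univ, if_true]
  rw [mul_div_cancel₀ _ (exp3Policy_pos η ℓ h k).ne']

lemma sum_exp3Policy_mul_exp3SecondMoment_cons (h : List (Fin K)) :
    ∑ b, exp3Policy η ℓ h b * exp3SecondMoment η ℓ (b :: h)
      = exp3SecondMoment η ℓ h + ∑ j, ℓ h.length j ^ 2 := by
  simp only [exp3SecondMoment, mul_add, sum_add_distrib, ← sum_mul, sum_exp3Policy, one_mul,
    mul_div_cancel₀ _ (exp3Policy_pos η ℓ h _).ne']

end Exp3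

section Exp3Bound

variable {K : ℕ} [NeZero K] {η : ℝ} {ℓ : ℕ → Fin K → ℝ}

lemma log_sum_exp_exp3Lhat_cons_le (hη : 0 ≤ η) (hℓ : ∀ t k, 0 ≤ ℓ t k) (a : Fin K)
    (h : List (Fin K)) :
    log (∑ j, exp (-η * exp3Lhat η ℓ (a :: h) j))
      ≤ log (∑ j, exp (-η * exp3Lhat η ℓ h j)) - η * ℓ h.length a
        + η ^ 2 / 2 * (ℓ h.length a ^ 2 / exp3Policy η ℓ h a) := by
  have hπ := (exp3Policy_pos η ℓ h a).ne'
  have := log_sum_exp_neg_mul_add_single_le η hη (exp3Lhat η ℓ h) a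
    (div_nonneg (hℓ h.length a) (exp3Policy_pos η ℓ h a).le)
  rw [show softmaxNeg η (exp3Lhat η ℓ h) a = exp3Policy η ℓ h a from rfl,
    mul_div_cancel₀ _ hπ] at this
  rw [exp3Lhat_cons]
  convert this using 3
  field_simp

lemma exp3_histLoss_le (hη : 0 ≤ η) (hℓ : ∀ t k, 0 ≤ ℓ t k) (h : List (Fin K)) (k : Fin K) :
    η * histLoss ℓ h
      ≤ log K + η * exp3Lhat η ℓ h k + η ^ 2 / 2 * exp3SecondMoment η ℓ h := by
  suffices hpot : log (∑ j, exp (-η * exp3Lhat η ℓ h j))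
      ≤ log K - η * histLoss ℓ h + η ^ 2 / 2 * exp3SecondMoment η ℓ h by
    linarith [neg_mul_le_log_sum_exp η (exp3Lhat η ℓ h) k]
  induction h with
  | nil => simp [exp3Lhat, histLoss, exp3SecondMoment]
  | cons a h ih =>
    have := log_sum_exp_exp3Lhat_cons_le hη hℓ a h
    simp only [histLoss, exp3SecondMoment]
    linarith

lemma exp3_expected_loss_le (hη : 0 ≤ η) (hℓ : ∀ t k, 0 ≤ ℓ t k) (n : ℕ) (k : Fin K) :
    η * ∑ a : Fin n → Fin K, exp3SeqProb η ℓ a * ∑ t, ℓ t.1 (a t)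
      ≤ log K + η * ∑ t : Fin n, ℓ t k + η ^ 2 / 2 * ∑ t : Fin n, ∑ j, ℓ t j ^ 2 := by
  have hLhat := sum_histProb_mul_eq_of_step _ (sum_exp3Policy η ℓ) (exp3Lhat η ℓ · k)
    (fun t => ℓ t k) (fun h => sum_exp3Policy_mul_exp3Lhat_cons η ℓ h k) n
  have hSecond := sum_histProb_mul_eq_of_step _ (sum_exp3Policy η ℓ) (exp3SecondMoment η ℓ)
    (fun t => ∑ j, ℓ t j ^ 2) (sum_exp3Policy_mul_exp3SecondMoment_cons η ℓ) n
  simp only [exp3Lhat, exp3SecondMoment, zero_add, ← Fin.sum_univ_eq_sum_range] at hLhat hSecond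
  simp only [exp3SeqProb_eq_histProb, ← histLoss_fullHist, mul_sum, ← hLhat, ← hSecond]
  calc ∑ a : Fin n → Fin K,
        η * (histProb (exp3Policy η ℓ) (fullHist a) * histLoss ℓ (fullHist a))
      ≤ ∑ a : Fin n → Fin K, histProb (exp3Policy η ℓ) (fullHist a) * (log K
          + η * exp3Lhat η ℓ (fullHist a) k + η ^ 2 / 2 * exp3SecondMoment η ℓ (fullHist a)) := by
        refine sum_le_sum fun a _ => ?_
        rw [mul_left_comm]
        exact mul_le_mul_of_nonneg_left (exp3_histLoss_le hη hℓ _ k)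
          (histProb_nonneg _ (fun h b => (exp3Policy_pos η ℓ h b).le) _)
    _ = _ := by
        simp only [mul_add, sum_add_distrib, ← sum_mul, sum_histProb _ (sum_exp3Policy η ℓ),
          one_mul, mul_left_comm _ η, mul_left_comm _ (η ^ 2 / 2)]

end Exp3Bound

lemma sub_le_two_sqrt_of_tuned_bound {L c E M : ℝ} (hL : 0 < L) (hc : 0 < c)
    (h : √(L / c) * E ≤ L + √(L / c) * M + √(L / c) ^ 2 / 2 * c) :
    E - M ≤ 2 * √(c * L) := by
  set r := √(c * L)
  have hr : 0 < r := sqrt_pos.2 (mul_pos hc hL)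
  have hrr : r ^ 2 = c * L := sq_sqrt (mul_pos hc hL).le
  have hη : √(L / c) = r / c := by
    rw [sqrt_eq_iff_mul_self_eq_of_pos (div_pos hr hc), div_mul_div_comm, ← sq, hrr]
    field_simp
  rw [hη, div_pow, hrr] at h
  have : r * (E - M) ≤ r * (3 / 2 * r) := by
    field_simp at h
    nlinarith
  nlinarith [le_of_mul_le_mul_left this hr]

theorem exp3_expected_regret_general (K T : ℕ) [NeZero K]
    (ℓ : ℕ → Fin K → ℝ) (hℓ : ∀ t k, ℓ t k ∈ Set.Icc (0 : ℝ) 1) :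
    (∑ a : Fin T → Fin K,
        exp3SeqProb (Real.sqrt (Real.log K / (T * K))) ℓ a * ∑ t, ℓ t.1 (a t))
      - Finset.univ.inf' Finset.univ_nonempty (fun k : Fin K => ∑ t : Fin T, ℓ t.1 k)
    ≤ 2 * Real.sqrt (T * K * Real.log K) := by
  set η := √(log K / (T * K))
  obtain ⟨k, -, hk⟩ := exists_mem_eq_inf' univ_nonempty fun k : Fin K => ∑ t : Fin T, ℓ t.1 k
  rw [hk]
  rcases subsingleton_or_nontrivial (Fin T → Fin K) with _ | ⟨a, b, hab⟩
  · -- with a single arm sequence, EXP3 plays the best arm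
    have hplay (a : Fin T → Fin K) : ∑ t, ℓ t.1 (a t) = ∑ t : Fin T, ℓ t.1 k := by
      rw [Subsingleton.elim a fun _ => k]
    simp only [hplay, ← sum_mul, sum_exp3SeqProb, one_mul, sub_self]
    positivity
  obtain ⟨t, ht⟩ := Function.ne_iff.1 hab
  have hK : (1 : ℝ) < K := mod_cast Fin.nontrivial_iff_two_le.1 (nontrivial_of_ne _ _ ht)
  have hTK : (0 : ℝ) < T * K := by
    have := t.pos
    positivity
  have hsq : ∑ t : Fin T, ∑ j, ℓ t j ^ 2 ≤ T * K := by
    calc ∑ t : Fin T, ∑ j, ℓ t j ^ 2 ≤ ∑ _t : Fin T, ∑ _j : Fin K, (1 : ℝ) := by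
          gcongr with t _ j
          exact pow_le_one₀ (hℓ t j).1 (hℓ t j).2
      _ = T * K := by simp
  refine sub_le_two_sqrt_of_tuned_bound (log_pos hK) hTK ?_
  calc η * _ ≤ _ := exp3_expected_loss_le (sqrt_nonneg _) (fun t k => (hℓ t k).1) T k
    _ ≤ _ := by gcongr

/-- Expected regret of EXP3 with learning rate `η = √(log K / (T K))` on an
adversarial `K`-armed bandit with losses in `[0,1]` over `T` rounds is at most
`2 √(T K log K)`. -/
theorem exp3_expected_regret (K T : ℕ) [NeZero K] (hT : 0 < T)
    (ℓ : ℕ → Fin K → ℝ) (hℓ : ∀ t k, ℓ t k ∈ Set.Icc (0 : ℝ) 1) :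
    (∑ a : Fin T → Fin K,
        exp3SeqProb (Real.sqrt (Real.log K / (T * K))) ℓ a * ∑ t, ℓ t.1 (a t))
      - Finset.univ.inf' Finset.univ_nonempty (fun k : Fin K => ∑ t : Fin T, ℓ t.1 k)
    ≤ 2 * Real.sqrt (T * K * Real.log K) :=
  exp3_expected_regret_general K T ℓ hℓ
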